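/- arXiv:2201.07553 — 2 statements merged into one kernel-verified Lean document; each statement's English description precedes it below -/
import Mathlib

section
/- Let G be a group of order n and let S' = {D₁, …, D_m} be a collection of m pairwise disjoint k-subsets of G*. (i) If D = ⋃ᵢ Dᵢ is an (n, mk, λ)-difference set, then S' is an (n, m, k, σ, μ)-external partial difference family if and only if S' is an (n, m, k, λ−σ, λ−μ)-disjoint partial difference family. (ii) If P = ⋃ᵢ Dᵢ is an (n, mk, λ, μ)-partial difference set, then S' is an (n, m, k, λ*, μ*)-external partial difference family if and only if S' is an (n, m, k, λ−λ*, μ−μ*)-disjoint partial difference family. -/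
open Finset

section Defs

variable {G : Type*} [AddGroup G] [DecidableEq G]

/-- The multiset of internal differences `x - y` (`x ≠ y`) of a finset. -/
def intDiff (D : Finset G) : Multiset G :=
  ((D ×ˢ D).filter fun p => p.1 ≠ p.2).val.map fun p => p.1 - p.2

/-- The multiset of external differences `x - y`, `x ∈ D₁`, `y ∈ D₂`. -/
def extDiff (D₁ D₂ : Finset G) : Multiset G :=
  (D₁ ×ˢ D₂).val.map fun p => p.1 - p.2

variable {ι : Type*} [Fintype ι] [DecidableEq ι]

/-- The multiset of all internal differences of a family of sets. -/
def famInt (D : ι → Finset G) : Multiset G := ∑ i, intDiff (D i)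

/-- The multiset of all external differences between distinct members of a family of sets. -/
def famExt (D : ι → Finset G) : Multiset G :=
  ∑ i, ∑ j, if j = i then 0 else extDiff (D i) (D j)

/-- The union of the members of a family of sets. -/
def famU (D : ι → Finset G) : Finset G := Finset.univ.biUnion D

variable [Fintype G]

/-- `D` is an `(n,k,λ)`-difference set: `Δ(D) = λ(G*)`. -/
def IsDS (n k : ℕ) (lam : ℤ) (D : Finset G) : Prop :=
  Fintype.card G = n ∧ D.card = k ∧
    ∀ x : G, ((intDiff D).count x : ℤ) = if x = 0 then 0 else lam

/-- `P` is an `(n,k,λ,μ)`-partial difference set: `Δ(P) = λ(P) + μ(G* \ P)`. -/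
def IsPDS (n k : ℕ) (lam mu : ℤ) (P : Finset G) : Prop :=
  Fintype.card G = n ∧ P.card = k ∧
    ∀ x : G, ((intDiff P).count x : ℤ) =
      if x ∈ P then lam else if x = 0 then 0 else mu

/-- `D` is a family of `m` pairwise disjoint `k`-subsets of a group of order `n`. -/
def FamShape (n m k : ℕ) (D : ι → Finset G) : Prop :=
  Fintype.card G = n ∧ Fintype.card ι = m ∧ (∀ i, (D i).card = k) ∧
    ∀ i j, i ≠ j → Disjoint (D i) (D j)

/-- `(n,m,k,λ)`-disjoint difference family: `⋃ᵢ Δ(Dᵢ) = λ(G*)`. -/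
def IsDDF (n m k : ℕ) (lam : ℤ) (D : ι → Finset G) : Prop :=
  FamShape n m k D ∧
    ∀ x : G, ((famInt D).count x : ℤ) = if x = 0 then 0 else lam

/-- `(n,m,k,λ)`-external difference family: `⋃_{i≠j} Δ(Dᵢ,Dⱼ) = λ(G*)`. -/
def IsEDF (n m k : ℕ) (lam : ℤ) (D : ι → Finset G) : Prop :=
  FamShape n m k D ∧
    ∀ x : G, ((famExt D).count x : ℤ) = if x = 0 then 0 else lam

/-- `(n,m,k,λ,μ)`-disjoint partial difference family:
sets in `G*`, `⋃ᵢ Δ(Dᵢ) = λ(S) + μ(G* \ S)` where `S = ⋃ᵢ Dᵢ`. -/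
def IsDPDF (n m k : ℕ) (lam mu : ℤ) (D : ι → Finset G) : Prop :=
  FamShape n m k D ∧ (∀ i, (0 : G) ∉ D i) ∧
    ∀ x : G, ((famInt D).count x : ℤ) =
      if x ∈ famU D then lam else if x = 0 then 0 else mu

/-- `(n,m,k,λ,μ)`-external partial difference family:
sets in `G*`, `⋃_{i≠j} Δ(Dᵢ,Dⱼ) = λ(S) + μ(G* \ S)` where `S = ⋃ᵢ Dᵢ`. -/
def IsEPDF (n m k : ℕ) (lam mu : ℤ) (D : ι → Finset G) : Prop :=
  FamShape n m k D ∧ (∀ i, (0 : G) ∉ D i) ∧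
    ∀ x : G, ((famExt D).count x : ℤ) =
      if x ∈ famU D then lam else if x = 0 then 0 else mu

end Defs

section FieldDefs

variable {F : Type*} [Field F] [DecidableEq F]

/-- `α` is a primitive element: every nonzero element is a power of `α`. -/
def IsPrimitiveElt (α : F) : Prop := ∀ x : F, x ≠ 0 → ∃ k : ℕ, x = α ^ k

/-- The coset `α^i⟨α^e⟩` of the cyclotomic class of order `e` (of size `f`). -/
def cyclo (α : F) (e f i : ℕ) : Finset F :=
  (Finset.range f).image fun j => α ^ (i + e * j)

/-- The cyclotomic number `(i,j)_e`: the number of pairs `(zᵢ, zⱼ) ∈ Cᵢ × Cⱼ` with `zᵢ + 1 = zⱼ`. -/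
def cycNum (α : F) (e f i j : ℕ) : ℕ :=
  ((cyclo α e f i ×ˢ cyclo α e f j).filter fun p => p.1 + 1 = p.2).card

/-- `Φᵢ = {x ∈ C₀^e : x ≠ 1, x - 1 ∈ α^i C₀^ε}`. -/
def Phi (α : F) (e f ε ρ i : ℕ) : Finset F :=
  (cyclo α e f 0).filter fun x => x ≠ 1 ∧ x - 1 ∈ cyclo α ε ρ i

/-- `φᵢ = |Φᵢ|`. -/
def phi (α : F) (e f ε ρ i : ℕ) : ℕ := (Phi α e f ε ρ i).card

end FieldDefs

/-! For a pairwise disjoint family, a difference of two distinct elements of `S = ⋃ᵢ Dᵢ` is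
either internal to one `Dᵢ` or external between two distinct members, so
`Δ(S) = ⋃ᵢ Δ(Dᵢ) + ⋃_{i≠j} Δ(Dᵢ, Dⱼ)`. If `S` is a PDS, the multiplicity of each `x` on the
left is known, so prescribing it in one family on the right prescribes it in the other.
A DS avoiding `0` is a PDS with `μ = λ`, which gives the DS case. -/

section Differences

open Function

variable {G : Type*} [AddGroup G]

lemma extDiff_eq_sum (A B : Finset G) : extDiff A B = ∑ a ∈ A, ∑ b ∈ B, {a - b} := by
  rw [extDiff, ← Multiset.sum_map_singleton (Multiset.map _ _), Multiset.map_map,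
    ← Finset.sum_eq_multiset_sum, Finset.sum_product]
  rfl

variable [DecidableEq G]

lemma intDiff_eq_sum (D : Finset G) :
    intDiff D = ∑ a ∈ D, ∑ b ∈ D, if a ≠ b then {a - b} else 0 := by
  rw [intDiff, ← Multiset.sum_map_singleton (Multiset.map _ _), Multiset.map_map,
    ← Finset.sum_eq_multiset_sum, Finset.sum_filter, Finset.sum_product]
  rfl

variable {ι : Type*} [Fintype ι] [DecidableEq ι]

lemma famInt_add_famExt (D : ι → Finset G) :
    famInt D + famExt D = ∑ i, ∑ j, if j = i then intDiff (D i) else extDiff (D i) (D j) := by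
  have hsplit : ∀ i j, (if j = i then intDiff (D i) else extDiff (D i) (D j)) =
      (if j = i then intDiff (D i) else 0) + (if j = i then 0 else extDiff (D i) (D j)) := by
    intro i j; split_ifs <;> simp
  simp only [famInt, famExt, hsplit, Finset.sum_add_distrib, Finset.sum_ite_eq',
    Finset.mem_univ, if_true]

theorem intDiff_famU {D : ι → Finset G} (hD : Pairwise (Disjoint on D)) :
    intDiff (famU D) = famInt D + famExt D := by
  have hsum : ∀ f : G → Multiset G, ∑ a ∈ famU D, f a = ∑ i, ∑ a ∈ D i, f a := fun f =>
    Finset.sum_biUnion fun i _ j _ hij => hD hij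
  rw [famInt_add_famExt, intDiff_eq_sum, hsum]
  refine Finset.sum_congr rfl fun i _ => ?_
  rw [Finset.sum_comm, hsum]
  refine Finset.sum_congr rfl fun j _ => ?_
  rw [Finset.sum_comm]
  split_ifs with hji
  · rw [hji, intDiff_eq_sum]
  · rw [extDiff_eq_sum]
    refine Finset.sum_congr rfl fun a ha => Finset.sum_congr rfl fun b hb => ?_
    rw [if_pos fun hab : a = b => disjoint_left.mp (hD (Ne.symm hji)) ha (hab ▸ hb)]

end Differences

section Designs

variable {G : Type*} [AddGroup G] [DecidableEq G] [Fintype G]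

theorem IsDS.isPDS {n k : ℕ} {lam : ℤ} {D : Finset G} (hD : IsDS n k lam D)
    (h0 : (0 : G) ∉ D) :
    IsPDS n k lam lam D := by
  refine ⟨hD.1, hD.2.1, fun x => ?_⟩
  rw [hD.2.2 x]
  by_cases hx : x ∈ D
  · rw [if_pos hx, if_neg (ne_of_mem_of_not_mem hx h0)]
  · rw [if_neg hx]

variable {ι : Type*} [Fintype ι] [DecidableEq ι]

theorem isEPDF_iff_isDPDF_of_isPDS_famU {n m k k' : ℕ} {lam mu a b : ℤ} {D : ι → Finset G}
    (hP : IsPDS n k' lam mu (famU D)) :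
    IsEPDF n m k a b D ↔ IsDPDF n m k (lam - a) (mu - b) D := by
  refine and_congr_right fun ⟨_, _, _, hdisj⟩ => and_congr_right fun _ =>
    forall_congr' fun x => ?_
  have hcount : ((famInt D).count x : ℤ) + (famExt D).count x =
      if x ∈ famU D then lam else if x = 0 then 0 else mu := by
    rw [← hP.2.2 x, intDiff_famU fun i j => hdisj i j, Multiset.count_add, Nat.cast_add]
  split_ifs at hcount ⊢ <;> omega

end Designs

theorem union_ds_or_pds_epdf_iff_dpdf_general {G : Type*} [AddGroup G] [DecidableEq G] [Fintype G]
    (n m k : ℕ) (lam mu sig nu lamStar muStar : ℤ) (D : Fin m → Finset G)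
    (hzero : ∀ i, (0 : G) ∉ D i) :
    (IsDS n (m * k) lam (famU D) →
      (IsEPDF n m k sig nu D ↔ IsDPDF n m k (lam - sig) (lam - nu) D)) ∧
    (IsPDS n (m * k) lam mu (famU D) →
      (IsEPDF n m k lamStar muStar D ↔ IsDPDF n m k (lam - lamStar) (mu - muStar) D)) := by
  have h0 : (0 : G) ∉ famU D := by simpa [famU] using hzero
  exact ⟨fun hS => isEPDF_iff_isDPDF_of_isPDS_famU (hS.isPDS h0),
    isEPDF_iff_isDPDF_of_isPDS_famU⟩

/-- Theorem: for a family of `m` pairwise disjoint `k`-subsets of `G*`: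
(i) if the union is an `(n,m*k,λ)`-DS then the family is an `(n,m,k,σ,ν)`-EPDF iff it is an
`(n,m,k,λ-σ,λ-ν)`-DPDF; (ii) if the union is an `(n,m*k,λ,μ)`-PDS then the family is an
`(n,m,k,λ*,μ*)`-EPDF iff it is an `(n,m,k,λ-λ*,μ-μ*)`-DPDF. -/
theorem union_ds_or_pds_epdf_iff_dpdf {G : Type*} [AddGroup G] [DecidableEq G] [Fintype G]
    (n m k : ℕ) (lam mu sig nu lamStar muStar : ℤ) (D : Fin m → Finset G)
    (hdisj : ∀ i j, i ≠ j → Disjoint (D i) (D j))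
    (hcard : ∀ i, (D i).card = k)
    (hzero : ∀ i, (0 : G) ∉ D i) :
    (IsDS n (m * k) lam (famU D) →
      (IsEPDF n m k sig nu D ↔ IsDPDF n m k (lam - sig) (lam - nu) D)) ∧
    (IsPDS n (m * k) lam mu (famU D) →
      (IsEPDF n m k lamStar muStar D ↔ IsDPDF n m k (lam - lamStar) (mu - muStar) D)) :=
  union_ds_or_pds_epdf_iff_dpdf_general n m k lam mu sig nu lamStar muStar D hzero
end

section
/- Let GF(q) be a finite field where q is a prime power and e ≥ 3 is a divisor of q − 1 with f = (q−1)/e > 1. Let I ⊂ {0, 1, …, e−1} with |I| = u and 2 ≤ u ≤ e−1, and let D′ = {C_i^e : i ∈ I}. Suppose there exist integers B and X such that B = (0,i)_e = (i,i)_e for all 1 ≤ i ≤ e−1 and X = (i,j)_e for all 1 ≤ i ≠ j ≤ e−1. Then: (i) for all 0 ≤ s ≠ t ≤ e−1, Δ(C_s^e, C_t^e) = B(C_s^e ∪ C_t^e) + X(G* \ (C_s^e ∪ C_t^e)) as multisets; (ii) D′ is a (q, u, (q−1)/e, 2B(u−1) + X(u−1)(u−2), Xu(u−1))-external partial difference family,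 which is proper when B ≠ X. -/
open Finset

/-!
Multiplying by a nonzero `c ∈ C_r` permutes the cyclotomic classes, shifting indices by `r`, so
the multiplicity of `c` in `Δ(C_s, C_t)` is the cyclotomic number `(t - r, s - r)_e`; inverting
`z` in `z + 1 = w` gives `(i, j)_e = (-i, j - i)_e`. With indices in `ZMod e`, the hypotheses
then show that `Δ(C_s, C_t)` takes the value `B` on `C_s ∪ C_t` and `X` elsewhere on `G*`. For a
family of `u` classes, an element of `C_r` gets `B` from the `2(u - 1)` ordered pairs involving
`r` and `X` from the other `(u - 1)(u - 2)`, while an element outside all classes gets `X` from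
all `u(u - 1)` pairs.
-/

section ExternalDifferences

variable {G : Type*} [DecidableEq G] {ι : Type*} [Fintype ι] [DecidableEq ι]

theorem sum_ite_eq_zero_eq_sub {R : Type*} [AddCommGroup R] (h : ι → R) (i : ι) :
    ∑ j, (if j = i then 0 else h j) = ∑ j, h j - h i := by
  rw [← Finset.sum_erase_eq_sub (Finset.mem_univ i), ← Finset.filter_ne', Finset.sum_filter]
  exact Finset.sum_congr rfl fun j _ => by split_ifs <;> simp_all

theorem sum_offDiag_const_add_add {R : Type*} [CommRing R] (a : R) (g : ι → R) :
    ∑ i, ∑ j, (if j = i then 0 else a + g i + g j) =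
      Fintype.card ι * (Fintype.card ι - 1) * a + 2 * (Fintype.card ι - 1) * ∑ i, g i := by
  simp only [sum_ite_eq_zero_eq_sub, Finset.sum_sub_distrib, Finset.sum_add_distrib,
    Finset.sum_const, Finset.card_univ, nsmul_eq_mul, ← Finset.mul_sum]
  ring

theorem card_filter_mem_eq_ite {D : ι → Finset G}
    (hD : ∀ i j, i ≠ j → Disjoint (D i) (D j)) (x : G) :
    #{i | x ∈ D i} = if x ∈ famU D then 1 else 0 := by
  split_ifs with hx
  · obtain ⟨r, -, hr⟩ := Finset.mem_biUnion.mp hx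
    rw [Finset.card_eq_one]
    refine ⟨r, Finset.eq_singleton_iff_unique_mem.mpr ⟨by simpa using hr, fun i hi => ?_⟩⟩
    by_contra hir
    exact Finset.disjoint_left.mp (hD i r hir) (by simpa using hi) hr
  · simpa [famU] using hx

variable [AddGroup G]

theorem count_extDiff (D₁ D₂ : Finset G) (x : G) :
    (extDiff D₁ D₂).count x = #{p ∈ D₁ ×ˢ D₂ | x = p.1 - p.2} := by
  rw [extDiff, Multiset.count_map]; rfl

theorem count_famExt (D : ι → Finset G) (x : G) :
    (famExt D).count x = ∑ i, ∑ j, if j = i then 0 else (extDiff (D i) (D j)).count x := by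
  simp only [famExt, Multiset.count_sum', apply_ite, Multiset.count_zero]

theorem count_zero_extDiff_of_disjoint {D₁ D₂ : Finset G} (h : Disjoint D₁ D₂) :
    (extDiff D₁ D₂).count 0 = 0 := by
  rw [count_extDiff, Finset.card_eq_zero, Finset.filter_eq_empty_iff]
  rintro ⟨a, b⟩ hab h0
  rw [Finset.mem_product] at hab
  exact Finset.disjoint_left.mp h hab.1 (sub_eq_zero.mp h0.symm ▸ hab.2)

variable [Fintype G]

theorem isEPDF_of_count_extDiff {n m k B X : ℕ} {D : ι → Finset G} (hD : FamShape n m k D)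
    (h0 : ∀ i, (0 : G) ∉ D i)
    (hcount : ∀ i j, i ≠ j → ∀ x, (extDiff (D i) (D j)).count x =
      if x ∈ D i ∪ D j then B else if x = 0 then 0 else X) :
    IsEPDF n m k (2 * (B : ℤ) * ((m : ℤ) - 1) + (X : ℤ) * ((m : ℤ) - 1) * ((m : ℤ) - 2))
      ((X : ℤ) * (m : ℤ) * ((m : ℤ) - 1)) D := by
  refine ⟨hD, h0, fun x => ?_⟩
  obtain ⟨-, hm, -, hdisj⟩ := hD
  rw [count_famExt]
  by_cases hx : x = 0
  · subst hx
    have hU : (0 : G) ∉ famU D := by simpa [famU] using h0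
    rw [if_neg hU, if_pos rfl, Nat.cast_eq_zero]
    refine Finset.sum_eq_zero fun i _ => Finset.sum_eq_zero fun j _ => ?_
    split_ifs with hji
    · rfl
    · exact count_zero_extDiff_of_disjoint (hdisj i j (Ne.symm hji))
  -- each off-diagonal term is `X`, raised by `B - X` for each of the two sets containing `x`
  set g : ι → ℤ := fun i => if x ∈ D i then (B : ℤ) - X else 0
  have hterm : ∀ i j, (if j = i then 0 else ((extDiff (D i) (D j)).count x : ℤ)) =
      if j = i then 0 else X + g i + g j := by
    intro i j
    split_ifs with hji
    · rfl
    have hij : x ∈ D i → x ∉ D j := fun h => Finset.disjoint_left.mp (hdisj i j (Ne.symm hji)) h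
    rw [hcount i j (Ne.symm hji)]
    by_cases hi : x ∈ D i <;> by_cases hj : x ∈ D j <;> simp_all [g]
  have hg : ∑ i, g i = (if x ∈ famU D then 1 else 0) * ((B : ℤ) - X) := by
    simp only [g, ← boole_mul _ ((B : ℤ) - X), ← Finset.sum_mul, Finset.sum_boole,
      card_filter_mem_eq_ite hdisj]
    split_ifs <;> simp
  push_cast
  simp only [hterm, sum_offDiag_const_add_add, hg, hm]
  split_ifs <;> ring

end ExternalDifferences

theorem IsPrimitiveElt.ne_zero {F : Type*} [Field F] [Fintype F] [DecidableEq F] {α : F}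
    (hα : IsPrimitiveElt α) (hcard : 2 < Fintype.card F) : α ≠ 0 := by
  rintro rfl
  have hsub : (Finset.univ : Finset F) ⊆ {0, 1} := fun x _ => by
    by_cases hx : x = 0
    · simp [hx]
    obtain ⟨k, rfl⟩ := hα x hx
    cases k <;> simp_all
  have := (Finset.card_le_card hsub).trans (Finset.card_le_two (a := (0 : F)) (b := 1))
  rw [Finset.card_univ] at this
  omega

theorem IsPrimitiveElt.isPrimitiveRoot {F : Type*} [Field F] [Fintype F] [DecidableEq F] {α : F}
    (hα : IsPrimitiveElt α) (hcard : 2 < Fintype.card F) :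
    IsPrimitiveRoot α (Fintype.card F - 1) := by
  have hα0 := hα.ne_zero hcard
  have hgen : ∀ x : Fˣ, x ∈ Subgroup.zpowers (Units.mk0 α hα0) := fun x => by
    obtain ⟨k, hk⟩ := hα x x.ne_zero
    exact ⟨k, Units.ext (by simp [hk])⟩
  rw [IsPrimitiveRoot.iff_orderOf, ← Units.val_mk0 hα0, orderOf_units,
    orderOf_eq_card_of_forall_mem_zpowers hgen, Nat.card_units, Nat.card_eq_fintype_card]

theorem ZMod.natCast_ne_natCast_of_lt {n a b : ℕ} (ha : a < n) (hb : b < n) (hab : a ≠ b) :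
    (a : ZMod n) ≠ b := fun h =>
  hab (by rw [← ZMod.val_natCast_of_lt ha, h, ZMod.val_natCast_of_lt hb])

section CyclotomicClasses

variable {F : Type*} [Field F] [DecidableEq F]

/-- `C_i^e` indexed by `i : ZMod e`, so that index arithmetic is modular. -/
def cycClass (α : F) (e f : ℕ) (i : ZMod e) : Finset F := cyclo α e f i.val

variable {α : F} {e f : ℕ}

theorem cycNum_val (i j : ZMod e) :
    cycNum α e f i.val j.val = #{p ∈ cycClass α e f i ×ˢ cycClass α e f j | p.1 + 1 = p.2} :=
  rfl

variable [NeZero e] [NeZero f]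

theorem mem_cyclo_iff (hα : IsPrimitiveRoot α (e * f)) {x : F} {n : ℕ} :
    x ∈ cyclo α e f n ↔ ∃ y, y ^ f = 1 ∧ x = α ^ n * y := by
  have hαe : IsPrimitiveRoot (α ^ e) f := hα.pow (Nat.pos_of_ne_zero (NeZero.ne _)) rfl
  simp only [cyclo, Finset.mem_image, Finset.mem_range, pow_add, pow_mul]
  constructor
  · rintro ⟨j, -, rfl⟩
    exact ⟨(α ^ e) ^ j, by rw [← pow_mul, mul_comm, pow_mul, hαe.pow_eq_one, one_pow], rfl⟩
  · rintro ⟨y, hy, rfl⟩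
    obtain ⟨j, hj, rfl⟩ := hαe.eq_pow_of_pow_eq_one hy
    exact ⟨j, hj, rfl⟩

theorem ne_zero_of_mem_cyclo (hα : IsPrimitiveRoot α (e * f)) {x : F} {n : ℕ}
    (hx : x ∈ cyclo α e f n) : x ≠ 0 := by
  obtain ⟨y, hy, rfl⟩ := (mem_cyclo_iff hα).mp hx
  have hy0 : y ≠ 0 := by rintro rfl; simp [zero_pow (NeZero.ne f)] at hy
  exact mul_ne_zero (pow_ne_zero _ (hα.ne_zero (NeZero.ne _))) hy0

theorem card_cyclo (hα : IsPrimitiveRoot α (e * f)) (n : ℕ) : (cyclo α e f n).card = f := by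
  have hαe : IsPrimitiveRoot (α ^ e) f := hα.pow (Nat.pos_of_ne_zero (NeZero.ne _)) rfl
  rw [cyclo, Finset.card_image_of_injOn, Finset.card_range]
  intro j hj k hk hjk
  simp only [pow_add, pow_mul] at hjk
  exact hαe.pow_inj (Finset.mem_range.mp hj) (Finset.mem_range.mp hk)
    (mul_left_cancel₀ (pow_ne_zero _ (hα.ne_zero (NeZero.ne _))) hjk)

theorem cyclo_mod (hα : IsPrimitiveRoot α (e * f)) (n : ℕ) :
    cyclo α e f (n % e) = cyclo α e f n := by
  set z := α ^ (e * (n / e))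
  have hz : z ^ f = 1 := by rw [← pow_mul, mul_right_comm, pow_mul, hα.pow_eq_one, one_pow]
  have hz0 : z ≠ 0 := pow_ne_zero _ (hα.ne_zero (NeZero.ne _))
  have hn : α ^ n = α ^ (n % e) * z := by rw [← pow_add, Nat.mod_add_div]
  ext x
  simp only [mem_cyclo_iff hα, hn]
  constructor
  · rintro ⟨y, hy, rfl⟩
    exact ⟨y / z, by rw [div_pow, hy, hz, div_one], by field_simp⟩
  · rintro ⟨y, hy, rfl⟩
    exact ⟨z * y, by rw [mul_pow, hz, hy, one_mul], by ring⟩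

theorem cyclo_eq_cycClass (hα : IsPrimitiveRoot α (e * f)) (n : ℕ) :
    cyclo α e f n = cycClass α e f n := by
  rw [cycClass, ZMod.val_natCast, cyclo_mod hα]

theorem mem_cycClass_iff (hα : IsPrimitiveRoot α (e * f)) {x : F} {i : ZMod e} :
    x ∈ cycClass α e f i ↔ ∃ y, y ^ f = 1 ∧ x = α ^ i.val * y :=
  mem_cyclo_iff hα

theorem pow_mem_cycClass (hα : IsPrimitiveRoot α (e * f)) (n : ℕ) :
    α ^ n ∈ cycClass α e f n := by
  rw [← cyclo_eq_cycClass hα, mem_cyclo_iff hα]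
  exact ⟨1, one_pow _, (mul_one _).symm⟩

theorem mul_mem_cycClass (hα : IsPrimitiveRoot α (e * f)) {a c : F} {i r : ZMod e}
    (ha : a ∈ cycClass α e f i) (hc : c ∈ cycClass α e f r) :
    a * c ∈ cycClass α e f (i + r) := by
  obtain ⟨y, hy, rfl⟩ := (mem_cycClass_iff hα).mp ha
  obtain ⟨y', hy', rfl⟩ := (mem_cycClass_iff hα).mp hc
  obtain ⟨z, hz, hzα⟩ : ∃ z, z ^ f = 1 ∧ α ^ i.val * α ^ r.val = α ^ (i + r).val * z := by
    have h := pow_mem_cycClass hα (e := e) (f := f) (i.val + r.val)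
    rwa [Nat.cast_add, ZMod.natCast_zmod_val, ZMod.natCast_zmod_val, mem_cycClass_iff hα,
      pow_add] at h
  refine (mem_cycClass_iff hα).mpr ⟨z * y * y', ?_, ?_⟩
  · rw [mul_pow, mul_pow, hz, hy, hy', one_mul, one_mul]
  · linear_combination (y * y') * hzα

theorem eq_of_mem_cycClass_of_mem (hα : IsPrimitiveRoot α (e * f)) {x : F} {i j : ZMod e}
    (hi : x ∈ cycClass α e f i) (hj : x ∈ cycClass α e f j) : i = j := by
  obtain ⟨y, hy, rfl⟩ := (mem_cycClass_iff hα).mp hi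
  obtain ⟨y', hy', h⟩ := (mem_cycClass_iff hα).mp hj
  have hpow : α ^ (i.val * f) = α ^ (j.val * f) := by
    simpa [mul_pow, hy, hy', ← pow_mul] using congrArg (· ^ f) h
  rw [(hα.isOfFinOrder (NeZero.ne _)).pow_eq_pow_iff_modEq, ← hα.eq_orderOf] at hpow
  exact ZMod.val_injective e
    ((hpow.mul_right_cancel' (NeZero.ne f)).eq_of_lt_of_lt i.val_lt j.val_lt)

theorem disjoint_cycClass (hα : IsPrimitiveRoot α (e * f)) {i j : ZMod e} (hij : i ≠ j) :
    Disjoint (cycClass α e f i) (cycClass α e f j) :=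
  Finset.disjoint_left.mpr fun _ hi hj => hij (eq_of_mem_cycClass_of_mem hα hi hj)

theorem exists_mem_cycClass (hα : IsPrimitiveRoot α (e * f)) (hprim : IsPrimitiveElt α) {x : F}
    (hx : x ≠ 0) : ∃ r, x ∈ cycClass α e f r := by
  obtain ⟨k, rfl⟩ := hprim x hx
  exact ⟨k, pow_mem_cycClass hα k⟩

theorem inv_mem_cycClass (hα : IsPrimitiveRoot α (e * f)) (hprim : IsPrimitiveElt α) {c : F}
    {r : ZMod e} (hc : c ∈ cycClass α e f r) : c⁻¹ ∈ cycClass α e f (-r) := by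
  have hc0 := ne_zero_of_mem_cyclo hα hc
  obtain ⟨r', hr'⟩ := exists_mem_cycClass hα hprim (inv_ne_zero hc0)
  have hone : c * c⁻¹ ∈ cycClass α e f 0 := by
    rw [mul_inv_cancel₀ hc0, ← pow_zero α, ← Nat.cast_zero]
    exact pow_mem_cycClass hα 0
  rwa [← eq_neg_of_add_eq_zero_right
    (eq_of_mem_cycClass_of_mem hα (mul_mem_cycClass hα hc hr') hone)]

theorem div_mem_cycClass (hα : IsPrimitiveRoot α (e * f)) (hprim : IsPrimitiveElt α) {a c : F}
    {i r : ZMod e} (ha : a ∈ cycClass α e f i) (hc : c ∈ cycClass α e f r) :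
    a / c ∈ cycClass α e f (i - r) := by
  rw [div_eq_mul_inv, sub_eq_add_neg]
  exact mul_mem_cycClass hα ha (inv_mem_cycClass hα hprim hc)

theorem count_extDiff_cycClass_eq_cycNum (hα : IsPrimitiveRoot α (e * f)) (hprim : IsPrimitiveElt α)
    {c : F} {r : ZMod e} (hc : c ∈ cycClass α e f r) (s t : ZMod e) :
    (extDiff (cycClass α e f s) (cycClass α e f t)).count c =
      cycNum α e f (t - r).val (s - r).val := by
  have hc0 := ne_zero_of_mem_cyclo hα hc
  rw [count_extDiff, cycNum_val]
  -- `a - b = c` iff `b / c + 1 = a / c`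
  refine Finset.card_nbij' (fun p => (p.2 / c, p.1 / c)) (fun p => (p.2 * c, p.1 * c))
    ?_ ?_ ?_ ?_
  · rintro ⟨a, b⟩ h
    simp only [Finset.mem_coe, Finset.mem_filter, Finset.mem_product] at h ⊢
    obtain ⟨⟨ha, hb⟩, hab⟩ := h
    refine ⟨⟨div_mem_cycClass hα hprim hb hc, div_mem_cycClass hα hprim ha hc⟩, ?_⟩
    field_simp
    linear_combination hab
  · rintro ⟨z, w⟩ h
    simp only [Finset.mem_coe, Finset.mem_filter, Finset.mem_product] at h ⊢
    obtain ⟨⟨hz, hw⟩, hzw⟩ := h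
    refine ⟨⟨by simpa using mul_mem_cycClass hα hw hc, by simpa using mul_mem_cycClass hα hz hc⟩,
      ?_⟩
    linear_combination c * hzw
  · rintro ⟨a, b⟩ -
    simp [div_mul_cancel₀ _ hc0]
  · rintro ⟨z, w⟩ -
    simp [mul_div_cancel_right₀ _ hc0]

theorem cycNum_eq_cycNum_neg (hα : IsPrimitiveRoot α (e * f)) (hprim : IsPrimitiveElt α)
    (i j : ZMod e) : cycNum α e f i.val j.val = cycNum α e f (-i).val (j - i).val := by
  rw [cycNum_val, cycNum_val]
  -- `z + 1 = w` iff `z⁻¹ + 1 = w / z`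
  refine Finset.card_nbij' (fun p => (p.1⁻¹, p.2 / p.1)) (fun p => (p.1⁻¹, p.2 / p.1))
    ?_ ?_ ?_ ?_
  · rintro ⟨z, w⟩ h
    simp only [Finset.mem_coe, Finset.mem_filter, Finset.mem_product] at h ⊢
    obtain ⟨⟨hz, hw⟩, hzw⟩ := h
    have hz0 := ne_zero_of_mem_cyclo hα hz
    refine ⟨⟨inv_mem_cycClass hα hprim hz, div_mem_cycClass hα hprim hw hz⟩, ?_⟩
    field_simp
    linear_combination hzw
  · rintro ⟨z, w⟩ h
    simp only [Finset.mem_coe, Finset.mem_filter, Finset.mem_product] at h ⊢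
    obtain ⟨⟨hz, hw⟩, hzw⟩ := h
    have hz0 := ne_zero_of_mem_cyclo hα hz
    refine ⟨⟨by simpa using inv_mem_cycClass hα hprim hz,
      by simpa using div_mem_cycClass hα hprim hw hz⟩, ?_⟩
    field_simp at hzw ⊢
    linear_combination hzw
  all_goals
    rintro ⟨z, w⟩ h
    have hz0 := ne_zero_of_mem_cyclo hα (Finset.mem_product.mp (Finset.mem_filter.mp h).1).1
    simp [hz0]

theorem count_extDiff_cycClass_eq_ite (hα : IsPrimitiveRoot α (e * f))
    (hprim : IsPrimitiveElt α) {B X : ℕ}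
    (hB0 : ∀ i : ZMod e, i ≠ 0 → cycNum α e f 0 i.val = B)
    (hBi : ∀ i : ZMod e, i ≠ 0 → cycNum α e f i.val i.val = B)
    (hX : ∀ i j : ZMod e, i ≠ 0 → j ≠ 0 → i ≠ j → cycNum α e f i.val j.val = X)
    {s t : ZMod e} (hst : s ≠ t) (x : F) :
    (extDiff (cycClass α e f s) (cycClass α e f t)).count x =
      if x ∈ cycClass α e f s ∪ cycClass α e f t then B else if x = 0 then 0 else X := by
  by_cases hx : x = 0
  · subst hx
    have h0 : ∀ i, (0 : F) ∉ cycClass α e f i := fun i h => ne_zero_of_mem_cyclo hα h rfl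
    rw [if_neg (by simp [h0]), if_pos rfl,
      count_zero_extDiff_of_disjoint (disjoint_cycClass hα hst)]
  obtain ⟨r, hr⟩ := exists_mem_cycClass hα hprim hx
  have hmem : ∀ i, x ∈ cycClass α e f i ↔ i = r :=
    fun i => ⟨fun h => eq_of_mem_cycClass_of_mem hα h hr, fun h => h ▸ hr⟩
  rw [count_extDiff_cycClass_eq_cycNum hα hprim hr, if_neg hx]
  simp only [Finset.mem_union, hmem]
  rcases eq_or_ne s r with rfl | hsr
  · rw [if_pos (Or.inl rfl), sub_self, cycNum_eq_cycNum_neg hα hprim, zero_sub, neg_sub]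
    exact hBi _ (sub_ne_zero.mpr hst)
  rcases eq_or_ne t r with rfl | htr
  · rw [if_pos (Or.inr rfl), sub_self, ZMod.val_zero]
    exact hB0 _ (sub_ne_zero.mpr hst)
  rw [if_neg (by tauto)]
  exact hX _ _ (sub_ne_zero.mpr htr) (sub_ne_zero.mpr hsr) (sub_left_injective.ne hst.symm)

theorem disjoint_cyclo (hα : IsPrimitiveRoot α (e * f)) {s t : ℕ} (hs : s < e) (ht : t < e)
    (hst : s ≠ t) : Disjoint (cyclo α e f s) (cyclo α e f t) := by
  rw [cyclo_eq_cycClass hα, cyclo_eq_cycClass hα]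
  exact disjoint_cycClass hα (ZMod.natCast_ne_natCast_of_lt hs ht hst)

theorem count_extDiff_cyclo_eq_ite (hα : IsPrimitiveRoot α (e * f)) (hprim : IsPrimitiveElt α)
    {B X : ℕ} (hB0 : ∀ i, 1 ≤ i → i ≤ e - 1 → cycNum α e f 0 i = B)
    (hBi : ∀ i, 1 ≤ i → i ≤ e - 1 → cycNum α e f i i = B)
    (hX : ∀ i j, 1 ≤ i → i ≤ e - 1 → 1 ≤ j → j ≤ e - 1 → i ≠ j → cycNum α e f i j = X)
    {s t : ℕ} (hs : s < e) (ht : t < e) (hst : s ≠ t) (x : F) :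
    (extDiff (cyclo α e f s) (cyclo α e f t)).count x =
      if x ∈ cyclo α e f s ∪ cyclo α e f t then B else if x = 0 then 0 else X := by
  have hval : ∀ i : ZMod e, i ≠ 0 → 1 ≤ i.val ∧ i.val ≤ e - 1 :=
    fun i hi => ⟨ZMod.val_pos.mpr hi, Nat.le_sub_one_of_lt i.val_lt⟩
  rw [cyclo_eq_cycClass hα, cyclo_eq_cycClass hα]
  exact count_extDiff_cycClass_eq_ite hα hprim
    (fun i hi => hB0 _ (hval i hi).1 (hval i hi).2)
    (fun i hi => hBi _ (hval i hi).1 (hval i hi).2)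
    (fun i j hi hj hij => hX _ _ (hval i hi).1 (hval i hi).2 (hval j hj).1 (hval j hj).2
      ((ZMod.val_injective e).ne hij))
    (ZMod.natCast_ne_natCast_of_lt hs ht hst) x

end CyclotomicClasses

theorem cyclotomic_classes_epdf_general {F : Type*} [Field F] [Fintype F] [DecidableEq F]
    (q e f u B X : ℕ) (α : F) (I : Finset ℕ)
    (hq : Fintype.card F = q) (hα : IsPrimitiveElt α)
    (hef : q = e * f + 1) (he : 3 ≤ e) (hf : 1 < f)
    (hI : I ⊆ Finset.range e) (hIcard : I.card = u) (hu2 : 2 ≤ u)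
    (hB0 : ∀ i, 1 ≤ i → i ≤ e - 1 → cycNum α e f 0 i = B)
    (hBi : ∀ i, 1 ≤ i → i ≤ e - 1 → cycNum α e f i i = B)
    (hX : ∀ i j, 1 ≤ i → i ≤ e - 1 → 1 ≤ j → j ≤ e - 1 → i ≠ j → cycNum α e f i j = X) :
    (∀ s t, s ≤ e - 1 → t ≤ e - 1 → s ≠ t →
      ∀ x : F, (extDiff (cyclo α e f s) (cyclo α e f t)).count x =
        if x ∈ cyclo α e f s ∪ cyclo α e f t then B else if x = 0 then 0 else X) ∧
    (IsEPDF q u f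
        (2 * (B : ℤ) * ((u : ℤ) - 1) + (X : ℤ) * ((u : ℤ) - 1) * ((u : ℤ) - 2))
        ((X : ℤ) * (u : ℤ) * ((u : ℤ) - 1))
        (fun i : ↥I => cyclo α e f (i : ℕ)) ∧
     (B ≠ X →
        2 * (B : ℤ) * ((u : ℤ) - 1) + (X : ℤ) * ((u : ℤ) - 1) * ((u : ℤ) - 2) ≠
          (X : ℤ) * (u : ℤ) * ((u : ℤ) - 1))) := by
  have : NeZero e := ⟨by omega⟩
  have : NeZero f := ⟨by omega⟩
  have hroot : IsPrimitiveRoot α (e * f) := by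
    simpa [hq, hef] using hα.isPrimitiveRoot (by rw [hq, hef]; nlinarith)
  have hIe : ∀ i : ↥I, (i : ℕ) < e := fun i => Finset.mem_range.mp (hI i.2)
  refine ⟨fun s t hs ht => count_extDiff_cyclo_eq_ite hroot hα hB0 hBi hX (by omega) (by omega),
    isEPDF_of_count_extDiff
      ⟨hq, by simpa using hIcard, fun i => card_cyclo hroot _,
        fun i j hij => disjoint_cyclo hroot (hIe i) (hIe j) (Subtype.val_injective.ne hij)⟩
      (fun i h => ne_zero_of_mem_cyclo hroot h rfl)
      (fun i j hij => count_extDiff_cyclo_eq_ite hroot hα hB0 hBi hX (hIe i) (hIe j)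
        (Subtype.val_injective.ne hij)),
    fun hBX h => hBX ?_⟩
  have : 2 * ((u : ℤ) - 1) * ((B : ℤ) - X) = 0 := by linear_combination h
  rcases mul_eq_zero.mp this with h | h <;> omega

/-- Proposition: suppose the cyclotomic numbers satisfy `B = (0,i)_e = (i,i)_e` for
`1 ≤ i ≤ e-1` and `X = (i,j)_e` for `1 ≤ i ≠ j ≤ e-1`.  Then
(i) `Δ(C_s^e, C_t^e) = B(C_s^e ∪ C_t^e) + X(G* \ (C_s^e ∪ C_t^e))` for all `s ≠ t`, and
(ii) any family of `u` distinct classes (`2 ≤ u ≤ e-1`) is a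
`(q,u,f,2B(u-1)+X(u-1)(u-2),Xu(u-1))`-EPDF, proper when `B ≠ X`. -/
theorem cyclotomic_classes_epdf {F : Type*} [Field F] [Fintype F] [DecidableEq F]
    (q e f u B X : ℕ) (α : F) (I : Finset ℕ)
    (hq : Fintype.card F = q) (hα : IsPrimitiveElt α)
    (hef : q = e * f + 1) (he : 3 ≤ e) (hf : 1 < f)
    (hI : I ⊆ Finset.range e) (hIcard : I.card = u) (hu2 : 2 ≤ u) (hue : u ≤ e - 1)
    (hB0 : ∀ i, 1 ≤ i → i ≤ e - 1 → cycNum α e f 0 i = B)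
    (hBi : ∀ i, 1 ≤ i → i ≤ e - 1 → cycNum α e f i i = B)
    (hX : ∀ i j, 1 ≤ i → i ≤ e - 1 → 1 ≤ j → j ≤ e - 1 → i ≠ j → cycNum α e f i j = X) :
    (∀ s t, s ≤ e - 1 → t ≤ e - 1 → s ≠ t →
      ∀ x : F, (extDiff (cyclo α e f s) (cyclo α e f t)).count x =
        if x ∈ cyclo α e f s ∪ cyclo α e f t then B else if x = 0 then 0 else X) ∧
    (IsEPDF q u f
        (2 * (B : ℤ) * ((u : ℤ) - 1) + (X : ℤ) * ((u : ℤ) - 1) * ((u : ℤ) - 2))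
        ((X : ℤ) * (u : ℤ) * ((u : ℤ) - 1))
        (fun i : ↥I => cyclo α e f (i : ℕ)) ∧
     (B ≠ X →
        2 * (B : ℤ) * ((u : ℤ) - 1) + (X : ℤ) * ((u : ℤ) - 1) * ((u : ℤ) - 2) ≠
          (X : ℤ) * (u : ℤ) * ((u : ℤ) - 1))) :=
  cyclotomic_classes_epdf_general q e f u B X α I hq hα hef he hf hI hIcard hu2 hB0 hBi hX
end
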